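/- arXiv:2503.16748 — 5 statements merged into one kernel-verified Lean document; each statement's English description precedes it below -/
import Mathlib

section
/- Fix real constants k_B > 0, T > 0, T₀ > 0, V₀ > 0, a natural number N ≥ 1, and 0 < q < 1. Define the Tsallis PDM ideal gas Helmholtz free energy A_q(V) = −k_B T · ln( (√(T/T₀) · ln(1 + (1−q)V/V₀)/(1−q))^N / N! ) for V > 0. Then for every V > 0, the function A_q has derivative at V equal to −P_q(V), where P_q(V) = N k_B T (1−q) / ( V₀ · (1 + (1−q)V/V₀) · ln(1 + (1−q)V/V₀) ). -/
theorem stmt_6 (kB T T₀ V₀ q : ℝ) (N : ℕ)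
    (hkB : 0 < kB) (hT : 0 < T) (hT₀ : 0 < T₀) (hV₀ : 0 < V₀)
    (hN : 1 ≤ N) (hq0 : 0 < q) (hq1 : q < 1)
    (A P : ℝ → ℝ)
    (hA : ∀ V, 0 < V → A V =
      -(kB * T) * Real.log ((Real.sqrt (T / T₀) *
        (Real.log (1 + (1 - q) * V / V₀) / (1 - q))) ^ N / (Nat.factorial N : ℝ)))
    (hP : ∀ V, 0 < V → P V =
      (N : ℝ) * kB * T * (1 - q) /
        (V₀ * (1 + (1 - q) * V / V₀) * Real.log (1 + (1 - q) * V / V₀))) :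
    ∀ V, 0 < V → HasDerivAt A (-(P V)) V := by
  intro V hV
  have hq : (0:ℝ) < 1 - q := by linarith
  have hu : (1:ℝ) < 1 + (1 - q) * V / V₀ := by
    have : 0 < (1 - q) * V / V₀ := by positivity
    linarith
  have h1 : HasDerivAt (fun V : ℝ => 1 + (1 - q) * V / V₀) ((1 - q) / V₀) V := by
    simpa using (((hasDerivAt_id V).const_mul (1 - q)).div_const V₀).const_add 1
  have h2 : HasDerivAt (fun V : ℝ => Real.log (1 + (1 - q) * V / V₀))
      (((1 - q) / V₀) / (1 + (1 - q) * V / V₀)) V := h1.log (by positivity)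
  set c := Real.sqrt (T / T₀) with hcdef
  set u := 1 + (1 - q) * V / V₀ with hudef
  set L := Real.log u with hLdef
  have hu0 : (0:ℝ) < u := by linarith
  have hL : 0 < L := Real.log_pos hu
  have hc : 0 < c := Real.sqrt_pos.mpr (by positivity)
  have hg : 0 < c * (L / (1 - q)) := by positivity
  have hNf : (0:ℝ) < (Nat.factorial N : ℝ) := by positivity
  have h3 : HasDerivAt (fun V : ℝ => c * (Real.log (1 + (1 - q) * V / V₀) / (1 - q)))
      (c * ((((1 - q) / V₀) / u) / (1 - q))) V :=
    (h2.div_const (1 - q)).const_mul c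
  have h4 := (h3.pow N).div_const (Nat.factorial N : ℝ)
  have hx : (c * (L / (1 - q))) ^ N / (Nat.factorial N : ℝ) ≠ 0 := by positivity
  have h5 := (h4.log hx).const_mul (-(kB * T))
  have h6 : HasDerivAt A
      (-(kB * T) * ((↑N * (c * (L / (1 - q))) ^ (N - 1) *
          (c * ((((1 - q) / V₀) / u) / (1 - q))) /
          (Nat.factorial N : ℝ)) /
        ((c * (L / (1 - q))) ^ N / (Nat.factorial N : ℝ)))) V := by
    refine h5.congr_of_eventuallyEq ?_
    filter_upwards [eventually_gt_nhds hV] with x hx using hA x hx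
  convert h6 using 1
  rw [hP V hV, ← hudef, ← hLdef]
  have hpow : (c * (L / (1 - q))) ^ N = (c * (L / (1 - q))) ^ (N - 1) * (c * (L / (1 - q))) := by
    rw [← pow_succ, Nat.sub_add_cancel hN]
  rw [hpow]
  have hg1 : (0:ℝ) < (c * (L / (1 - q))) ^ (N - 1) := by positivity
  field_simp
end

section
/- Fix real constants k_B > 0, T > 0, T₀ > 0, V₀ > 0, a natural number N ≥ 1, and κ > 0. Define the Kaniadakis PDM ideal gas Helmholtz free energy A_κ(V) = −k_B T · ln( (√(T/T₀) · arcsinh(κ V/V₀)/κ)^N / N! ) for V > 0. Then for every V > 0, the function A_κ has derivative at V equal to −P_κ(V), where P_κ(V) = κ N k_B T / ( V₀ · √(1 + κ²(V/V₀)²) · arcsinh(κ V/V₀) ). -/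
open Real Filter Topology

/- On V > 0 the logarithm of the partition function splits as
ln Z_κ(V) = N ln arsinh(κ V / V₀) + const, so the pressure is N k_B T times the derivative of
the first term, and (ln arsinh)'(x) = 1 / (√(1 + x²) arsinh x). -/

lemma Real.log_mul_div_pow_div {a y κ M : ℝ} (ha : a ≠ 0) (hy : y ≠ 0) (hκ : κ ≠ 0)
    (hM : M ≠ 0) (N : ℕ) :
    log ((a * (y / κ)) ^ N / M) = N * log y + (N * log (a / κ) - log M) := by
  have hprod : a * (y / κ) = y * (a / κ) := by ring
  rw [log_div (pow_ne_zero N (by positivity)) hM, log_pow, hprod,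
    log_mul hy (div_ne_zero ha hκ)]
  ring

lemma Real.hasDerivAt_log_arsinh {x : ℝ} (hx : x ≠ 0) :
    HasDerivAt (fun y => log (arsinh y)) (1 / (√(1 + x ^ 2) * arsinh x)) x := by
  refine ((hasDerivAt_arsinh x).log (arsinh_eq_zero_iff.not.mpr hx)).congr_deriv ?_
  field_simp

lemma Real.hasDerivAt_log_arsinh_mul_div {a b x : ℝ} (ha : a ≠ 0) (hb : b ≠ 0) (hx : x ≠ 0) :
    HasDerivAt (fun y => log (arsinh (a * y / b)))
      (a / (b * √(1 + a ^ 2 * (x / b) ^ 2) * arsinh (a * x / b))) x := by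
  have hlin : HasDerivAt (fun y => a * y / b) (a / b) x := by
    simpa using ((hasDerivAt_id x).const_mul a).div_const b
  refine ((hasDerivAt_log_arsinh (by positivity : a * x / b ≠ 0)).comp x hlin).congr_deriv ?_
  rw [show a ^ 2 * (x / b) ^ 2 = (a * x / b) ^ 2 by ring]
  field_simp

theorem stmt_7_general (kB T T₀ V₀ κ : ℝ) (N : ℕ)
    (hT : 0 < T) (hT₀ : 0 < T₀) (hV₀ : 0 < V₀)
    (hκ : 0 < κ)
    (A P : ℝ → ℝ)
    (hA : ∀ V, 0 < V → A V =
      -(kB * T) * Real.log ((Real.sqrt (T / T₀) *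
        (Real.arsinh (κ * V / V₀) / κ)) ^ N / (Nat.factorial N : ℝ)))
    (hP : ∀ V, 0 < V → P V =
      κ * (N : ℝ) * kB * T /
        (V₀ * Real.sqrt (1 + κ ^ 2 * (V / V₀) ^ 2) * Real.arsinh (κ * V / V₀))) :
    ∀ V, 0 < V → HasDerivAt A (-(P V)) V := by
  intro V hV
  have hc : √(T / T₀) ≠ 0 := (sqrt_pos.mpr (div_pos hT hT₀)).ne'
  set C := N * log (√(T / T₀) / κ) - log (N.factorial : ℝ)
  have hA_near : A =ᶠ[𝓝 V] fun W => -(kB * T) * (N * log (arsinh (κ * W / V₀)) + C) := by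
    filter_upwards [eventually_gt_nhds hV] with W hW
    have harsinh : arsinh (κ * W / V₀) ≠ 0 := (arsinh_pos_iff.mpr (by positivity)).ne'
    rw [hA W hW, log_mul_div_pow_div hc harsinh hκ.ne' (by positivity)]
  have hderiv := (((hasDerivAt_log_arsinh_mul_div hκ.ne' hV₀.ne' hV.ne').const_mul
    (N : ℝ)).add_const C).const_mul (-(kB * T))
  refine (hderiv.congr_of_eventuallyEq hA_near).congr_deriv ?_
  rw [hP V hV]
  ring

theorem stmt_7 (kB T T₀ V₀ κ : ℝ) (N : ℕ)
    (hkB : 0 < kB) (hT : 0 < T) (hT₀ : 0 < T₀) (hV₀ : 0 < V₀)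
    (hN : 1 ≤ N) (hκ : 0 < κ)
    (A P : ℝ → ℝ)
    (hA : ∀ V, 0 < V → A V =
      -(kB * T) * Real.log ((Real.sqrt (T / T₀) *
        (Real.arsinh (κ * V / V₀) / κ)) ^ N / (Nat.factorial N : ℝ)))
    (hP : ∀ V, 0 < V → P V =
      κ * (N : ℝ) * kB * T /
        (V₀ * Real.sqrt (1 + κ ^ 2 * (V / V₀) ^ 2) * Real.arsinh (κ * V / V₀))) :
    ∀ V, 0 < V → HasDerivAt A (-(P V)) V :=
  stmt_7_general kB T T₀ V₀ κ N hT hT₀ hV₀ hκ A P hA hP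
end

section
/- Fix real constants k_B > 0, T > 0, V₀ > 0, a natural number N ≥ 1, and 0 < q < 1. Then for every V > 0, the Tsallis PDM ideal gas pressure P_q(V) = N k_B T (1−q) / ( V₀ (1 + (1−q)V/V₀) ln(1 + (1−q)V/V₀) ) is strictly less than the standard ideal gas pressure P(V) = N k_B T / V. Equivalently, u < (1+u)·ln(1+u) for every u > 0. -/
/-!
The pressure inequality reduces, with `u = (1 - q) V / V₀ > 0`, to `u < (1 + u) log (1 + u)`,
which is the strict inequality `log x < x - 1` at `x = (1 + u)⁻¹`.
-/

open Real

lemma Real.lt_one_add_mul_log_one_add {u : ℝ} (hu : 0 < u) : u < (1 + u) * log (1 + u) := by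
  have h1u : 0 < 1 + u := by linarith
  have hlog : log (1 + u)⁻¹ < (1 + u)⁻¹ - 1 :=
    log_lt_sub_one_of_pos (inv_pos.mpr h1u) (inv_ne_one.mpr (by linarith))
  rw [log_inv] at hlog
  have hdiv : u / (1 + u) < log (1 + u) := by
    have : (1 + u)⁻¹ - 1 = -(u / (1 + u)) := by field_simp; ring
    linarith
  rwa [div_lt_iff₀' h1u] at hdiv

theorem stmt_10_general (kB T V₀ q : ℝ) (N : ℕ)
    (hkB : 0 < kB) (hT : 0 < T) (hV₀ : 0 < V₀)
    (hN : 1 ≤ N) (hq1 : q < 1) :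
    (∀ V : ℝ, 0 < V →
      (N : ℝ) * kB * T * (1 - q) /
          (V₀ * (1 + (1 - q) * V / V₀) * Real.log (1 + (1 - q) * V / V₀))
        < (N : ℝ) * kB * T / V) ∧
    (∀ u : ℝ, 0 < u → u < (1 + u) * Real.log (1 + u)) := by
  refine ⟨fun V hV => ?_, fun u => lt_one_add_mul_log_one_add⟩
  set u := (1 - q) * V / V₀ with hu_def
  have hq : 0 < 1 - q := by linarith
  have hu : 0 < u := by positivity
  have hNkT : 0 < (N : ℝ) * kB * T := by
    have : (0 : ℝ) < N := by exact_mod_cast hN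
    positivity
  have hV₀u : V₀ * u = V * (1 - q) := by rw [hu_def]; field_simp
  have hden : V * (1 - q) < V₀ * (1 + u) * log (1 + u) := by
    rw [← hV₀u, mul_assoc]
    exact mul_lt_mul_of_pos_left (lt_one_add_mul_log_one_add hu) hV₀
  calc (N : ℝ) * kB * T * (1 - q) / (V₀ * (1 + u) * log (1 + u))
      < (N : ℝ) * kB * T * (1 - q) / (V * (1 - q)) :=
        div_lt_div_of_pos_left (by positivity) (by positivity) hden
    _ = (N : ℝ) * kB * T / V := mul_div_mul_right _ _ hq.ne'

theorem stmt_10 (kB T V₀ q : ℝ) (N : ℕ)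
    (hkB : 0 < kB) (hT : 0 < T) (hV₀ : 0 < V₀)
    (hN : 1 ≤ N) (hq0 : 0 < q) (hq1 : q < 1) :
    (∀ V : ℝ, 0 < V →
      (N : ℝ) * kB * T * (1 - q) /
          (V₀ * (1 + (1 - q) * V / V₀) * Real.log (1 + (1 - q) * V / V₀))
        < (N : ℝ) * kB * T / V) ∧
    (∀ u : ℝ, 0 < u → u < (1 + u) * Real.log (1 + u)) :=
  stmt_10_general kB T V₀ q N hkB hT hV₀ hN hq1
end

section
/- Fix real constants k_B > 0, T > 0, V₀ > 0, a natural number N ≥ 1, and κ > 0. Then for every V > 0, the Kaniadakis PDM ideal gas pressure P_κ(V) = κ N k_B T / ( V₀ √(1 + κ²(V/V₀)²) · arcsinh(κ V/V₀) ) is strictly less than the standard ideal gas pressure P(V) = N k_B T / V. Equivalently, w < √(1+w²)·arcsinh(w) for every w > 0. -/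
/-!
Substituting `w = sinh y`, the inequality `w < √(1 + w²) · arsinh w` becomes `sinh y < y cosh y`
for `y > 0`, which holds because `y cosh y - sinh y` vanishes at `0` and has derivative
`y sinh y > 0`. The pressure comparison is this inequality at `w = κ V / V₀`.
-/

open Real

theorem Real.sinh_lt_mul_cosh {y : ℝ} (hy : 0 < y) : sinh y < y * cosh y := by
  have hmono : StrictMonoOn (fun y : ℝ => y * cosh y - sinh y) (Set.Ici 0) := by
    refine strictMonoOn_of_deriv_pos (convex_Ici 0) (by fun_prop) fun x hx => ?_
    rw [interior_Ici, Set.mem_Ioi] at hx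
    have hderiv : deriv (fun y : ℝ => y * cosh y - sinh y) x = x * sinh x := by
      rw [deriv_fun_sub (by fun_prop) (by fun_prop), deriv_fun_mul (by fun_prop) (by fun_prop),
        deriv_id'', deriv_cosh, deriv_sinh]
      ring
    rw [hderiv]
    exact mul_pos hx (sinh_pos_iff.2 hx)
  simpa using hmono Set.self_mem_Ici hy.le hy

theorem Real.lt_sqrt_one_add_sq_mul_arsinh {w : ℝ} (hw : 0 < w) : w < √(1 + w ^ 2) * arsinh w := by
  simpa only [sinh_arsinh, cosh_arsinh, mul_comm] using sinh_lt_mul_cosh (arsinh_pos_iff.2 hw)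

theorem kaniadakis_pressure_lt {c κ V₀ V : ℝ} (hc : 0 < c) (hκ : 0 < κ) (hV₀ : 0 < V₀)
    (hV : 0 < V) :
    κ * c / (V₀ * √(1 + κ ^ 2 * (V / V₀) ^ 2) * arsinh (κ * V / V₀)) < c / V := by
  set w := κ * V / V₀ with hw
  have hw_pos : 0 < w := by positivity
  have hsq : 1 + κ ^ 2 * (V / V₀) ^ 2 = 1 + w ^ 2 := by rw [hw]; ring
  have hden : κ * V < V₀ * √(1 + κ ^ 2 * (V / V₀) ^ 2) * arsinh (κ * V / V₀) := by
    rw [hsq, mul_assoc, ← div_lt_iff₀' hV₀]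
    exact lt_sqrt_one_add_sq_mul_arsinh hw_pos
  calc κ * c / (V₀ * √(1 + κ ^ 2 * (V / V₀) ^ 2) * arsinh (κ * V / V₀))
      < κ * c / (κ * V) := div_lt_div_of_pos_left (by positivity) (by positivity) hden
    _ = c / V := mul_div_mul_left c V hκ.ne'

theorem stmt_11 (kB T V₀ κ : ℝ) (N : ℕ)
    (hkB : 0 < kB) (hT : 0 < T) (hV₀ : 0 < V₀) (hN : 1 ≤ N) (hκ : 0 < κ) :
    (∀ V : ℝ, 0 < V →
      κ * (N : ℝ) * kB * T /
          (V₀ * Real.sqrt (1 + κ ^ 2 * (V / V₀) ^ 2) * Real.arsinh (κ * V / V₀))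
        < (N : ℝ) * kB * T / V) ∧
    (∀ w : ℝ, 0 < w → w < Real.sqrt (1 + w ^ 2) * Real.arsinh w) := by
  have hNkT : 0 < (N : ℝ) * kB * T := by
    have : (0 : ℝ) < N := by exact_mod_cast hN
    positivity
  refine ⟨fun V hV => ?_, fun w hw => lt_sqrt_one_add_sq_mul_arsinh hw⟩
  simpa only [mul_assoc] using kaniadakis_pressure_lt hNkT hκ hV₀ hV
end

section
/- Fix real constants k_B > 0, T₀ > 0, c > 0 and a natural number N ≥ 1. Define A(T) = −k_B T · ( N·(ln(T/T₀) + c T/T₀) − ln(N!) ) for T > 0. Then for every T > 0: (i) the internal energy U(T) = A(T) − T·A'(T) equals N k_B T (1 + c T/T₀), and (ii) the heat capacity C(T) = U'(T) equals N k_B (1 + 2 c T/T₀); in particular C(T) depends linearly (affinely) on T. -/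
/-!
Since `A = -k_B T ln Z`, the Gibbs–Helmholtz relation gives `U = A - T A' = k_B T² (ln Z)'`, and
`(ln Z)' = N (1/T + c/T₀)`; so `U` is quadratic in `T` and `C = U'` is affine.
-/

open Real Filter Topology

/-- `ln Z` for the gas, `Z = (1/N!) ((T/T₀) e^{cT/T₀})^N`. -/
noncomputable def logPartition (T₀ c : ℝ) (N : ℕ) (T : ℝ) : ℝ :=
  N * (log (T / T₀) + c * T / T₀) - log (Nat.factorial N : ℝ)

noncomputable def internalEnergy (A : ℝ → ℝ) (T : ℝ) : ℝ :=
  A T - T * deriv A T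

theorem hasDerivAt_logPartition {T₀ c T : ℝ} (N : ℕ) (hT₀ : T₀ ≠ 0) (hT : T ≠ 0) :
    HasDerivAt (logPartition T₀ c N) (N * (1 / T + c / T₀)) T := by
  have hlog : HasDerivAt (fun x => log (x / T₀)) (1 / T) T := by
    refine (((hasDerivAt_id' T).div_const T₀).log (div_ne_zero hT hT₀)).congr_deriv ?_
    field_simp
  have hlin : HasDerivAt (fun x => c * x / T₀) (c / T₀) T := by
    simpa using ((hasDerivAt_id' T).const_mul c).div_const T₀
  exact ((hlog.add hlin).const_mul (N : ℝ)).sub_const _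

/-- The Gibbs–Helmholtz relation. -/
theorem internalEnergy_eq_of_eventuallyEq {A F : ℝ → ℝ} {k T F' : ℝ}
    (hA : A =ᶠ[𝓝 T] fun x => -(k * x) * F x) (hF : HasDerivAt F F' T) :
    internalEnergy A T = k * T ^ 2 * F' := by
  have hA' : HasDerivAt A (-(k * 1) * F T + -(k * T) * F') T :=
    (((hasDerivAt_id T).const_mul k).neg.mul hF).congr_of_eventuallyEq hA
  rw [internalEnergy, hA'.deriv, hA.eq_of_nhds]
  ring

theorem stmt_19_general (kB T₀ c : ℝ) (N : ℕ)
    (hT₀ : 0 < T₀)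
    (A : ℝ → ℝ)
    (hA : ∀ T, 0 < T → A T =
      -(kB * T) * ((N : ℝ) * (Real.log (T / T₀) + c * T / T₀)
        - Real.log (Nat.factorial N : ℝ))) :
    ∀ T, 0 < T →
      (A T - T * deriv A T = (N : ℝ) * kB * T * (1 + c * T / T₀)) ∧
      (deriv (fun T' => A T' - T' * deriv A T') T = (N : ℝ) * kB * (1 + 2 * c * T / T₀)) := by
  have hU : ∀ T, 0 < T → internalEnergy A T = N * kB * T * (1 + c * T / T₀) := by
    intro T hT
    have hA_near : A =ᶠ[𝓝 T] fun x => -(kB * x) * logPartition T₀ c N x :=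
      eventually_gt_nhds hT |>.mono fun x hx => hA x hx
    rw [internalEnergy_eq_of_eventuallyEq hA_near
      (hasDerivAt_logPartition N hT₀.ne' hT.ne')]
    field_simp
  intro T hT
  refine ⟨hU T hT, ?_⟩
  have hU_near : internalEnergy A =ᶠ[𝓝 T] fun x => N * kB * x * (1 + c * x / T₀) :=
    eventually_gt_nhds hT |>.mono hU
  have hquad : HasDerivAt (fun x => N * kB * x * (1 + c * x / T₀))
      (N * kB * 1 * (1 + c * T / T₀) + N * kB * T * (c * 1 / T₀)) T :=
    ((hasDerivAt_id' T).const_mul _).mul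
      ((((hasDerivAt_id' T).const_mul c).div_const T₀).const_add 1)
  change deriv (internalEnergy A) T = _
  rw [hU_near.deriv_eq, hquad.deriv]
  ring

theorem stmt_19 (kB T₀ c : ℝ) (N : ℕ)
    (hkB : 0 < kB) (hT₀ : 0 < T₀) (hc : 0 < c) (hN : 1 ≤ N)
    (A : ℝ → ℝ)
    (hA : ∀ T, 0 < T → A T =
      -(kB * T) * ((N : ℝ) * (Real.log (T / T₀) + c * T / T₀)
        - Real.log (Nat.factorial N : ℝ))) :
    ∀ T, 0 < T →
      (A T - T * deriv A T = (N : ℝ) * kB * T * (1 + c * T / T₀)) ∧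
      (deriv (fun T' => A T' - T' * deriv A T') T = (N : ℝ) * kB * (1 + 2 * c * T / T₀)) :=
  stmt_19_general kB T₀ c N hT₀ A hA
end
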